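/- (Proposition 1.) Under Assumption 1 with parameter k, for all integers t, t' with t − t' ≥ k + 1, if cov(w_{t−1}, w_{t'}) ≠ 0, then the instrumental-variable estimand identifies the growth rate of the return to skill: cov(w_t − w_{t−1}, w_{t'}) / cov(w_{t−1}, w_{t'}) = (μ_t − μ_{t−1}) / μ_{t−1}; in particular μ_{t−1} ≠ 0. -/

import Mathlib

open MeasureTheory ProbabilityTheory

/-- Covariance of two real-valued random variables under measure `P`. -/
noncomputable def cov {Ω : Type*} [MeasurableSpace Ω] (P : Measure Ω) (X Y : Ω → ℝ) : ℝ :=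
  ∫ ω, (X ω - ∫ a, X a ∂P) * (Y ω - ∫ a, Y a ∂P) ∂P

/-- Variance of a real-valued random variable under measure `P`. -/
noncomputable def Var {Ω : Type*} [MeasurableSpace Ω] (P : Measure Ω) (X : Ω → ℝ) : ℝ :=
  cov P X X

/-!
Covariance is bilinear on `L²`. Against the instrument `w_{t'}`, Assumption 1 makes the skill
growth `θ_t - θ_{t-1}` and the shocks `ε_t`, `ε_{t-1}` uncorrelated, because both `t` and `t - 1`
lie at least `k` periods after `t'`. Hence, with `C := cov(θ_{t-1}, w_{t'})`,
`cov(w_{t-1}, w_{t'}) = μ_{t-1} C` and `cov(w_t - w_{t-1}, w_{t'}) = (μ_t - μ_{t-1}) C`, and the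
IV ratio is `(μ_t - μ_{t-1}) / μ_{t-1}` as soon as the denominator is nonzero.
-/

section LinearModel

variable {Ω : Type*} [MeasurableSpace Ω] {P : Measure Ω}

theorem cov_eq_covariance (X Y : Ω → ℝ) : cov P X Y = covariance X Y P := rfl

variable {X θ ε w : Ω → ℝ} {m : ℝ}

theorem memLp_linear_model (hθ : MemLp θ 2 P) (hε : MemLp ε 2 P)
    (hw : ∀ ω, w ω = m * θ ω + ε ω) : MemLp w 2 P := by
  rw [funext hw]
  exact (hθ.const_mul m).add hε

variable [IsFiniteMeasure P]

theorem cov_linear_model_left (hX : MemLp X 2 P) (hθ : MemLp θ 2 P) (hε : MemLp ε 2 P)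
    (hw : ∀ ω, w ω = m * θ ω + ε ω) : cov P w X = m * cov P θ X + cov P ε X := by
  rw [funext hw]
  exact (covariance_add_left (hθ.const_mul m) hε hX).trans
    (congrArg (· + _) (covariance_const_mul_left m))

theorem cov_linear_model_right (hX : MemLp X 2 P) (hθ : MemLp θ 2 P) (hε : MemLp ε 2 P)
    (hw : ∀ ω, w ω = m * θ ω + ε ω) : cov P X w = m * cov P X θ + cov P X ε := by
  simp only [cov_eq_covariance, covariance_comm X]
  exact cov_linear_model_left hX hθ hε hw

theorem cov_linear_model_eq_zero (hX : MemLp X 2 P) (hθ : MemLp θ 2 P) (hε : MemLp ε 2 P)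
    (hw : ∀ ω, w ω = m * θ ω + ε ω) (hXθ : cov P X θ = 0) (hXε : cov P X ε = 0) :
    cov P X w = 0 := by
  rw [cov_linear_model_right hX hθ hε hw, hXθ, hXε, mul_zero, add_zero]

theorem cov_sub_left {Y Z : Ω → ℝ} (hX : MemLp X 2 P) (hY : MemLp Y 2 P) (hZ : MemLp Z 2 P) :
    cov P (fun ω => X ω - Y ω) Z = cov P X Z - cov P Y Z :=
  covariance_fun_sub_left hX hY hZ

end LinearModel

theorem ne_zero_and_div_eq_of_eq_mul {a b c d C : ℝ} (ha : a = c * C) (hb : b = d * C)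
    (hb₀ : b ≠ 0) : d ≠ 0 ∧ a / b = c / d := by
  subst ha hb
  obtain ⟨hd, hC⟩ := mul_ne_zero_iff.mp hb₀
  exact ⟨hd, mul_div_mul_right c d hC⟩

theorem IV_identifies_return_growth_general
    {Ω : Type*} [MeasurableSpace Ω] (P : Measure Ω) [IsProbabilityMeasure P]
    (θ ε : ℤ → Ω → ℝ) (μ : ℤ → ℝ) (w : ℤ → Ω → ℝ)
    (hθ : ∀ t, MemLp (θ t) 2 P) (hε : ∀ t, MemLp (ε t) 2 P)
    (hw : ∀ t ω, w t ω = μ t * θ t ω + ε t ω)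
    (k : ℕ)
    (A1i : ∀ t t' : ℤ, (k : ℤ) ≤ t - t' →
      cov P (fun ω => θ t ω - θ (t - 1) ω) (θ t') = 0)
    (A1ii : ∀ t t' : ℤ, (k : ℤ) ≤ t - t' →
      cov P (fun ω => θ t ω - θ (t - 1) ω) (ε t') = 0)
    (A1iii : ∀ t t' : ℤ, (k : ℤ) ≤ t - t' → cov P (ε t) (θ t') = 0)
    (A1iv : ∀ t t' : ℤ, (k : ℤ) ≤ t - t' → cov P (ε t) (ε t') = 0) :
    ∀ t t' : ℤ, (k : ℤ) + 1 ≤ t - t' →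
      cov P (w (t - 1)) (w t') ≠ 0 →
      μ (t - 1) ≠ 0 ∧
        cov P (fun ω => w t ω - w (t - 1) ω) (w t') / cov P (w (t - 1)) (w t') =
          (μ t - μ (t - 1)) / μ (t - 1) := by
  intro t t' hlag hden₀
  have hlag₀ : (k : ℤ) ≤ t - t' := by omega
  have hlag₁ : (k : ℤ) ≤ t - 1 - t' := by omega
  have hwL2 (s : ℤ) : MemLp (w s) 2 P := memLp_linear_model (hθ s) (hε s) (hw s)
  have hΔθL2 : MemLp (fun ω => θ t ω - θ (t - 1) ω) 2 P := (hθ t).sub (hθ (t - 1))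
  have cov_eq_zero {X : Ω → ℝ} (hX : MemLp X 2 P) :=
    cov_linear_model_eq_zero hX (hθ t') (hε t') (hw t')
  have hΔθ := cov_eq_zero hΔθL2 (A1i t t' hlag₀) (A1ii t t' hlag₀)
  have hεt := cov_eq_zero (hε t) (A1iii t t' hlag₀) (A1iv t t' hlag₀)
  have hεt₁ := cov_eq_zero (hε (t - 1)) (A1iii _ t' hlag₁) (A1iv _ t' hlag₁)
  have hθt : cov P (θ t) (w t') = cov P (θ (t - 1)) (w t') := by
    rwa [cov_sub_left (hθ t) (hθ (t - 1)) (hwL2 t'), sub_eq_zero] at hΔθ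
  have hwt₁ := cov_linear_model_left (hwL2 t') (hθ (t - 1)) (hε (t - 1)) (hw (t - 1))
  have hwt := cov_linear_model_left (hwL2 t') (hθ t) (hε t) (hw t)
  refine ne_zero_and_div_eq_of_eq_mul (C := cov P (θ (t - 1)) (w t')) ?_ ?_ hden₀
  · rw [cov_sub_left (hwL2 t) (hwL2 (t - 1)) (hwL2 t'), hwt, hwt₁, hθt, hεt, hεt₁]
    ring
  · rw [hwt₁, hεt₁, add_zero]

/-- Proposition 1: under Assumption 1 with parameter `k`, for `t - t' ≥ k + 1` the IV
estimand identifies the growth rate of the return to skill. -/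
theorem IV_identifies_return_growth
    {Ω : Type*} [MeasurableSpace Ω] (P : Measure Ω) [IsProbabilityMeasure P]
    (θ ε : ℤ → Ω → ℝ) (μ : ℤ → ℝ) (w : ℤ → Ω → ℝ)
    (hθ : ∀ t, MemLp (θ t) 2 P) (hε : ∀ t, MemLp (ε t) 2 P)
    (hw : ∀ t ω, w t ω = μ t * θ t ω + ε t ω)
    (k : ℕ) (hk : 1 ≤ k)
    (A1i : ∀ t t' : ℤ, (k : ℤ) ≤ t - t' →
      cov P (fun ω => θ t ω - θ (t - 1) ω) (θ t') = 0)
    (A1ii : ∀ t t' : ℤ, (k : ℤ) ≤ t - t' →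
      cov P (fun ω => θ t ω - θ (t - 1) ω) (ε t') = 0)
    (A1iii : ∀ t t' : ℤ, (k : ℤ) ≤ t - t' → cov P (ε t) (θ t') = 0)
    (A1iv : ∀ t t' : ℤ, (k : ℤ) ≤ t - t' → cov P (ε t) (ε t') = 0) :
    ∀ t t' : ℤ, (k : ℤ) + 1 ≤ t - t' →
      cov P (w (t - 1)) (w t') ≠ 0 →
      μ (t - 1) ≠ 0 ∧
        cov P (fun ω => w t ω - w (t - 1) ω) (w t') / cov P (w (t - 1)) (w t') =
          (μ t - μ (t - 1)) / μ (t - 1) :=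
  IV_identifies_return_growth_general P θ ε μ w hθ hε hw k A1i A1ii A1iii A1iv
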